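/- Fix a dense sequence (s_n) with s_n ∈ {0,1}^n. Suppose h : 2^ℕ → {0,1} is Baire measurable. Then there exist n ∈ ℕ and c ∈ 2^ℕ such that h(s_n ⌢ (0) ⌢ c) = h(s_n ⌢ (1) ⌢ c). -/
import Mathlib


/-- The basic clopen set `N_t` of infinite binary sequences extending the finite string `t`. -/
def Nt (t : List Bool) : Set (ℕ → Bool) :=
  {u : ℕ → Bool | ∀ i < t.length, u i = t.getD i false}

/-- The concatenation `s ⌢ (ε) ⌢ c` of a finite string `s`, a bit `ε`, and an infinite
sequence `c`, as an infinite binary sequence. -/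
def ext (s : List Bool) (ε : Bool) (c : ℕ → Bool) : ℕ → Bool := fun i =>
  if i < s.length then s.getD i false else if i = s.length then ε else c (i - s.length - 1)

lemma continuous_ext (s : List Bool) (ε : Bool) : Continuous (fun c => ext s ε c) := by
  refine continuous_pi fun i => ?_
  unfold ext
  by_cases h1 : i < s.length
  · simp only [h1, if_true]; exact continuous_const
  · by_cases h2 : i = s.length
    · simp only [h1, h2, if_false, if_true]; exact continuous_const
    · simp only [h1, h2, if_false]; exact continuous_apply _

/-- The inverse: drop the first `k` coordinates. -/
def shiftInv (k : ℕ) (u : ℕ → Bool) : ℕ → Bool := fun i => u (i + k)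

lemma continuous_shiftInv (k : ℕ) : Continuous (shiftInv k) :=
  continuous_pi fun i => continuous_apply _

lemma shiftInv_ext (s : List Bool) (ε : Bool) (c : ℕ → Bool) :
    shiftInv (s.length + 1) (ext s ε c) = c := by
  funext i
  simp only [shiftInv, ext]
  have h1 : ¬ (i + (s.length + 1) < s.length) := by omega
  have h2 : ¬ (i + (s.length + 1) = s.length) := by omega
  simp only [h1, h2, if_false]
  congr 1
  omega

lemma isOpen_Nt (t : List Bool) : IsOpen (Nt t) := by
  have : Nt t = ⋂ i ∈ Finset.range t.length, (fun u : ℕ → Bool => u i) ⁻¹' {t.getD i false} := by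
    ext u
    simp [Nt, Set.mem_iInter]
  rw [this]
  exact isOpen_biInter_finset fun i _ =>
    (isOpen_discrete _).preimage (continuous_apply i)

lemma ext_mem_Nt (s : List Bool) (ε : Bool) (c : ℕ → Bool) :
    ext s ε c ∈ Nt (s ++ [ε]) := by
  intro i hi
  simp only [List.length_append, List.length_singleton] at hi
  unfold ext
  by_cases h1 : i < s.length
  · simp only [h1, if_true]
    rw [List.getD_append _ _ _ _ h1]
  · have h2 : i = s.length := by omega
    simp only [h1, h2, if_false, if_true, lt_irrefl]
    rw [List.getD_append_right _ _ _ _ le_rfl]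
    simp

lemma ext_image (s : List Bool) (ε : Bool) (U : Set (ℕ → Bool)) :
    (ext s ε) '' U = shiftInv (s.length + 1) ⁻¹' U ∩ Nt (s ++ [ε]) := by
  ext u
  constructor
  · rintro ⟨c, hc, rfl⟩
    refine ⟨?_, ext_mem_Nt s ε c⟩
    rw [Set.mem_preimage, shiftInv_ext]
    exact hc
  · rintro ⟨hu, hNt⟩
    refine ⟨shiftInv (s.length + 1) u, hu, ?_⟩
    funext i
    unfold ext shiftInv
    by_cases h1 : i < s.length
    · simp only [h1, if_true]
      have := hNt i (by simp [List.length_append]; omega)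
      rw [this, List.getD_append _ _ _ _ h1]
    · by_cases h2 : i = s.length
      · simp only [h1, h2, if_false, if_true]
        have := hNt s.length (by simp [List.length_append])
        rw [this, List.getD_append_right _ _ _ _ le_rfl]
        simp
      · simp only [h1, h2, if_false]
        congr 1
        omega

lemma isOpenMap_ext (s : List Bool) (ε : Bool) : IsOpenMap (ext s ε) := by
  intro U hU
  rw [ext_image]
  exact ((continuous_shiftInv _).isOpen_preimage _ hU).inter (isOpen_Nt _)

lemma residual_preimage_ext (s : List Bool) (ε : Bool) {S : Set (ℕ → Bool)}
    (hS : S ∈ residual (ℕ → Bool)) : (ext s ε) ⁻¹' S ∈ residual (ℕ → Bool) := by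
  rw [mem_residual_iff] at hS ⊢
  obtain ⟨T, hTo, hTd, hTc, hTs⟩ := hS
  refine ⟨(fun t => (ext s ε) ⁻¹' t) '' T, ?_, ?_, hTc.image _, ?_⟩
  · rintro _ ⟨t, ht, rfl⟩
    exact (continuous_ext s ε).isOpen_preimage _ (hTo t ht)
  · rintro _ ⟨t, ht, rfl⟩
    exact (hTd t ht).preimage (isOpenMap_ext s ε)
  · intro c hc
    apply hTs
    intro t ht
    exact hc _ ⟨t, ht, rfl⟩

/-- For a dense sequence `s_n ∈ {0,1}^n` and Baire measurable `h : 2^ℕ → 2`, there are `n`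
and `c` with `h(s_n ⌢ (0) ⌢ c) = h(s_n ⌢ (1) ⌢ c)`. -/
theorem stmt_12 (s : ℕ → List Bool) (hlen : ∀ n, (s n).length = n)
    (hdense : ∀ t : List Bool, ∃ n, (s n).take t.length = t ∧ t.length < n)
    (h : (ℕ → Bool) → Bool) (hBaire : BaireMeasurableSet (h ⁻¹' {true})) :
    ∃ (n : ℕ) (c : ℕ → Bool), h (ext (s n) false c) = h (ext (s n) true c) := by
  classical
  set A : Set (ℕ → Bool) := h ⁻¹' {true} with hA
  obtain ⟨U, hUopen, hUeq⟩ := hBaire.residualEq_isOpen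
  -- S is the residual set on which A and U agree
  have hS : {x | x ∈ A ↔ x ∈ U} ∈ residual (ℕ → Bool) := by
    filter_upwards [hUeq] with x hx
    exact iff_of_eq hx
  rcases Set.eq_empty_or_nonempty U with hU | ⟨x, hxU⟩
  · -- U empty: A is meager, so both sides land outside A on a residual set
    obtain ⟨n, -, -⟩ := hdense []
    have h0 := residual_preimage_ext (s n) false hS
    have h1 := residual_preimage_ext (s n) true hS
    obtain ⟨c, hc0, hc1⟩ := (dense_of_mem_residual (Filter.inter_mem h0 h1)).nonempty
    refine ⟨n, c, ?_⟩
    have e0 : ext (s n) false c ∉ A := fun hmem => by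
      have := (hc0 : _ ∈ A ↔ _ ∈ U).mp hmem; rw [hU] at this; exact this
    have e1 : ext (s n) true c ∉ A := fun hmem => by
      have := (hc1 : _ ∈ A ↔ _ ∈ U).mp hmem; rw [hU] at this; exact this
    simp only [hA, Set.mem_preimage, Set.mem_singleton_iff] at e0 e1
    rw [Bool.not_eq_true] at e0 e1
    rw [e0, e1]
  · -- U nonempty: there's a cylinder N_t ⊆ U
    obtain ⟨I, v, hv, hvsub⟩ := isOpen_pi_iff.mp hUopen x hxU
    -- choose N large enough
    set N : ℕ := (I.sup id) + 1 with hN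
    have hIN : ∀ i ∈ I, i < N := fun i hi => Nat.lt_succ_of_le (Finset.le_sup (f := id) hi)
    set t : List Bool := (List.range N).map x with ht
    have htlen : t.length = N := by simp [ht]
    have htgetD : ∀ i < N, t.getD i false = x i := by
      intro i hi
      rw [ht, List.getD_eq_getElem _ _ (by simpa using hi)]
      simp
    -- any element of Nt t is in U
    have hNtU : Nt t ⊆ U := by
      intro u hu
      apply hvsub
      intro i hi
      have hiN : i < N := hIN i hi
      have := hu i (htlen ▸ hiN)
      rw [this, htgetD i hiN]
      exact (hv i hi).2
    obtain ⟨n, hntake, hnlen⟩ := hdense t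
    rw [htlen] at hntake hnlen
    -- ext (s n) ε c ∈ Nt t for any ε c
    have hext_mem : ∀ (ε : Bool) (c : ℕ → Bool), ext (s n) ε c ∈ Nt t := by
      intro ε c i hi
      rw [htlen] at hi
      have hisn : i < (s n).length := by rw [hlen]; omega
      unfold ext
      simp only [hisn, if_true]
      have key : ((s n).take N).getD i false = (s n).getD i false := by
        rw [List.getD_eq_getElem _ _ (by simp [hlen]; omega),
          List.getD_eq_getElem _ _ hisn]
        simp
      rw [← key, hntake]
    have h0 := residual_preimage_ext (s n) false hS
    have h1 := residual_preimage_ext (s n) true hS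
    obtain ⟨c, hc0, hc1⟩ := (dense_of_mem_residual (Filter.inter_mem h0 h1)).nonempty
    refine ⟨n, c, ?_⟩
    have e0 : ext (s n) false c ∈ A :=
      (hc0 : _ ∈ A ↔ _ ∈ U).mpr (hNtU (hext_mem false c))
    have e1 : ext (s n) true c ∈ A :=
      (hc1 : _ ∈ A ↔ _ ∈ U).mpr (hNtU (hext_mem true c))
    simp only [hA, Set.mem_preimage, Set.mem_singleton_iff] at e0 e1
    rw [e0, e1]
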